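/- Let k = pn + q with integers p ≥ 1 and 0 ≤ q ≤ n−1. Any closed walk W with k visits on n targets contains a closed subwalk with a terminus having at least n + ⌈q/p⌉ visits. Consequently R*(k) ≥ R*(n + ⌈q/p⌉). -/

import Mathlib

/-- A closed walk with `k` visits on `n` targets, modeled as a `k`-periodic
sequence of targets in which consecutive visits are distinct and every
target is visited at least once in each period. -/
structure CWalk (n k : ℕ) where
  seq : ℕ → Fin n
  periodic : ∀ i, seq (i + k) = seq i
  step : ∀ i, seq i ≠ seq (i + 1)
  covers : ∀ d : Fin n, ∃ i < k, seq i = d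

namespace CWalk

/-- Travel time from the `i`-th to the `j`-th visit. -/
noncomputable def tt {n k : ℕ} (c : Fin n → Fin n → ℝ) (W : CWalk n k) (i j : ℕ) : ℝ :=
  ∑ t ∈ Finset.Ico i j, c (W.seq t) (W.seq (t + 1))

/-- Duration of one period of the walk. -/
noncomputable def duration {n k : ℕ} (c : Fin n → Fin n → ℝ) (W : CWalk n k) : ℝ :=
  W.tt c 0 k

/-- Revisit time of target `d`: the maximum time between consecutive visits to `d`. -/
noncomputable def RT {n k : ℕ} (c : Fin n → Fin n → ℝ) (W : CWalk n k) (d : Fin n) : ℝ :=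
  sSup {T : ℝ | ∃ i j : ℕ, i < j ∧ W.seq i = d ∧ W.seq j = d ∧
    (∀ t, i < t → t < j → W.seq t ≠ d) ∧ T = W.tt c i j}

/-- Revisit time of the walk: maximum revisit time over all targets. -/
noncomputable def R {n k : ℕ} (c : Fin n → Fin n → ℝ) (W : CWalk n k) : ℝ :=
  sSup {T : ℝ | ∃ d : Fin n, T = W.RT c d}

end CWalk

/-- Optimal revisit time over all closed walks with `k` visits. -/
noncomputable def Rstar (n : ℕ) (c : Fin n → Fin n → ℝ) (k : ℕ) : ℝ :=
  sInf {T : ℝ | ∃ W : CWalk n k, T = W.R c}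

/-- Optimal TSP tour length: minimal duration of a closed walk with `n` visits
(each target is then visited exactly once). -/
noncomputable def TSPstar (n : ℕ) (c : Fin n → Fin n → ℝ) : ℝ :=
  sInf {T : ℝ | ∃ W : CWalk n n, T = W.duration c}

/-!
Some target `d` is visited at most `p` times per period, since `k < (p + 1) n`. The returns to
`d` during one period add up to `k` steps, so one of them takes at least `k / p` steps, i.e. at
least `n + ⌈q/p⌉`. A longest closed subwalk visits every target, because a target missing from
it would have a strictly longer return around it. Shortcutting a covering closed subwalk of length
`L ≥ m ≥ n` along a suitable subsequence of exactly `m` of its visits (a prefix, followed by the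
first occurrences of the remaining targets) yields, by the triangle inequality, a closed walk with
`m` visits whose duration, hence revisit time, is at most the length of the subwalk, which is at
most `R(W)`. Since `sInf ∅ = 0`, the case where no walk with `k` visits exists needs separate
care: then, by parity when `n = 2`, there is none with `n + ⌈q/p⌉` visits either.
-/

theorem Nat.exists_eq_of_le_of_le_of_succ_le {f : ℕ → ℕ} (hf : ∀ b, f (b + 1) ≤ f b + 1)
    {m N : ℕ} (h0 : f 0 ≤ m) (hN : m ≤ f N) : ∃ b, f b = m := by
  induction N with
  | zero => exact ⟨0, le_antisymm h0 hN⟩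
  | succ N ih =>
    by_cases h : m ≤ f N
    · exact ih h
    · exact ⟨N + 1, by have := hf N; omega⟩

theorem Nat.add_ceilDiv_le {n p q L : ℕ} (hp : 0 < p) (h : p * n + q ≤ p * L) :
    n + (q + p - 1) / p ≤ L := by
  obtain ⟨e, rfl⟩ : ∃ e, L = n + e :=
    Nat.exists_eq_add_of_le (Nat.le_of_mul_le_mul_left (by omega) hp)
  have hq : q ≤ e * p := by rw [mul_add] at h; linarith
  have := (Nat.div_lt_iff_lt_mul hp).2 (show q + p - 1 < (e + 1) * p by rw [add_one_mul]; omega)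
  omega

theorem Nat.count_add_period {P : ℕ → Prop} [DecidablePred P] {k : ℕ}
    (hP : ∀ t, P (t + k) ↔ P t) (a : ℕ) :
    Nat.count P (a + k) = Nat.count P a + Nat.count P k := by
  induction a with
  | zero => simp
  | succ a ih =>
    rw [show a + 1 + k = a + k + 1 by omega, Nat.count_succ, Nat.count_succ, ih]
    simp only [hP]
    omega

namespace CWalk

variable {n k : ℕ}

theorem period_pos (W : CWalk n k) : 0 < k := by
  obtain ⟨i, hi, -⟩ := W.covers (W.seq 0)
  omega

theorem two_le (W : CWalk n k) : 2 ≤ n := by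
  have := Fin.val_ne_of_ne (W.step 0)
  have := (W.seq 0).isLt
  have := (W.seq 1).isLt
  omega

theorem seq_add_mul (W : CWalk n k) (i m : ℕ) : W.seq (i + k * m) = W.seq i := by
  induction m with
  | zero => simp
  | succ m ih => rw [Nat.mul_succ, ← Nat.add_assoc, W.periodic, ih]

section Cost

variable (c : Fin n → Fin n → ℝ) (W : CWalk n k)

theorem tt_add_tt {i j l : ℕ} (hij : i ≤ j) (hjl : j ≤ l) :
    W.tt c i j + W.tt c j l = W.tt c i l :=
  Finset.sum_Ico_consecutive _ hij hjl

theorem tt_self_add_one (i : ℕ) : W.tt c i (i + 1) = c (W.seq i) (W.seq (i + 1)) := by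
  simp [tt]

variable {c}

theorem tt_nonneg (hc : ∀ u v, u ≠ v → 0 ≤ c u v) (i j : ℕ) : 0 ≤ W.tt c i j :=
  Finset.sum_nonneg fun t _ => hc _ _ (W.step t)

theorem tt_le_tt (hc : ∀ u v, u ≠ v → 0 ≤ c u v) {i j l : ℕ} (hij : i ≤ j)
    (hjl : j ≤ l) : W.tt c i j ≤ W.tt c i l := by
  rw [← W.tt_add_tt c hij hjl]
  linarith [W.tt_nonneg hc j l]

theorem le_tt (htri : ∀ u v w, c u w ≤ c u v + c v w) {i j : ℕ} (hij : i < j) :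
    c (W.seq i) (W.seq j) ≤ W.tt c i j := by
  induction j, hij using Nat.le_induction with
  | base => rw [tt_self_add_one]
  | succ j hij ih =>
    rw [← W.tt_add_tt c (by omega : i ≤ j) j.le_succ, tt_self_add_one]
    linarith [htri (W.seq i) (W.seq j) (W.seq (j + 1))]

variable (c)

theorem tt_add_period (a : ℕ) : W.tt c a (a + k) = W.duration c := by
  induction a with
  | zero => simp [duration]
  | succ a ih =>
    have h1 := W.tt_add_tt c (show a ≤ a + 1 by omega) (show a + 1 ≤ a + k + 1 by omega)
    have h2 := W.tt_add_tt c (show a ≤ a + k by omega) (show a + k ≤ a + k + 1 by omega)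
    rw [tt_self_add_one] at h1 h2
    rw [W.periodic, show a + k + 1 = a + 1 + k by omega, W.periodic] at h2
    rw [show a + k + 1 = a + 1 + k by omega] at h1
    linarith

theorem sum_tt {g : ℕ → ℕ} (hg : Monotone g) (m : ℕ) :
    ∑ t ∈ Finset.range m, W.tt c (g t) (g (t + 1)) = W.tt c (g 0) (g m) := by
  induction m with
  | zero => simp [tt]
  | succ m ih =>
    rw [Finset.sum_range_succ, ih, W.tt_add_tt c (hg m.zero_le) (hg m.le_succ)]

end Cost

structure IsClosedSubwalk (W : CWalk n k) (d : Fin n) (i j : ℕ) : Prop where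
  lt : i < j
  seq_left : W.seq i = d
  seq_right : W.seq j = d
  seq_ne : ∀ t, i < t → t < j → W.seq t ≠ d

namespace IsClosedSubwalk

variable {W : CWalk n k} {d : Fin n} {i j : ℕ}

theorem le_add_period (h : W.IsClosedSubwalk d i j) : j ≤ i + k := by
  by_contra hlt
  exact h.seq_ne (i + k) (by have := W.period_pos; omega) (by omega)
    (by rw [W.periodic, h.seq_left])

theorem add_period (h : W.IsClosedSubwalk d i j) : W.IsClosedSubwalk d (i + k) (j + k) where
  lt := by have := h.lt; omega
  seq_left := by rw [W.periodic, h.seq_left]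
  seq_right := by rw [W.periodic, h.seq_right]
  seq_ne t hit htj := by
    obtain ⟨s, rfl⟩ : ∃ s, t = s + k := ⟨t - k, by omega⟩
    rw [W.periodic]
    exact h.seq_ne s (by omega) (by omega)

theorem tt_le_duration {c : Fin n → Fin n → ℝ} (hc : ∀ u v, u ≠ v → 0 ≤ c u v)
    (h : W.IsClosedSubwalk d i j) : W.tt c i j ≤ W.duration c :=
  W.tt_add_period c i ▸ W.tt_le_tt hc h.lt.le h.le_add_period

end IsClosedSubwalk

section RevisitTime

variable {c : Fin n → Fin n → ℝ} (W : CWalk n k)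

theorem duration_nonneg (hc : ∀ u v, u ≠ v → 0 ≤ c u v) : 0 ≤ W.duration c :=
  W.tt_nonneg hc 0 k

theorem RT_nonneg (hc : ∀ u v, u ≠ v → 0 ≤ c u v) (d : Fin n) : 0 ≤ W.RT c d :=
  Real.sSup_nonneg fun _ ⟨i, j, _, _, _, _, hT⟩ => hT ▸ W.tt_nonneg hc i j

theorem RT_le_duration (hc : ∀ u v, u ≠ v → 0 ≤ c u v) (d : Fin n) :
    W.RT c d ≤ W.duration c :=
  Real.sSup_le (fun _ ⟨_, _, hij, hi, hj, hne, hT⟩ =>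
    hT ▸ IsClosedSubwalk.tt_le_duration hc ⟨hij, hi, hj, hne⟩) (W.duration_nonneg hc)

theorem tt_le_RT (hc : ∀ u v, u ≠ v → 0 ≤ c u v) {d : Fin n} {i j : ℕ}
    (h : W.IsClosedSubwalk d i j) : W.tt c i j ≤ W.RT c d :=
  le_csSup ⟨W.duration c, fun _ ⟨_, _, hij, hi, hj, hne, hT⟩ =>
    hT ▸ IsClosedSubwalk.tt_le_duration hc ⟨hij, hi, hj, hne⟩⟩
    ⟨i, j, h.lt, h.seq_left, h.seq_right, h.seq_ne, rfl⟩

theorem R_nonneg (hc : ∀ u v, u ≠ v → 0 ≤ c u v) : 0 ≤ W.R c :=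
  Real.sSup_nonneg fun _ ⟨d, hT⟩ => hT ▸ W.RT_nonneg hc d

theorem R_le_duration (hc : ∀ u v, u ≠ v → 0 ≤ c u v) : W.R c ≤ W.duration c :=
  Real.sSup_le (fun _ ⟨d, hT⟩ => hT ▸ W.RT_le_duration hc d) (W.duration_nonneg hc)

theorem RT_le_R (hc : ∀ u v, u ≠ v → 0 ≤ c u v) (d : Fin n) : W.RT c d ≤ W.R c :=
  le_csSup ⟨W.duration c, fun _ ⟨d', hT⟩ => hT ▸ W.RT_le_duration hc d'⟩ ⟨d, rfl⟩

end RevisitTime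

section Visits

variable (W : CWalk n k)

theorem visits_infinite (d : Fin n) : {t | W.seq t = d}.Infinite := by
  obtain ⟨a, -, ha⟩ := W.covers d
  refine Set.infinite_of_forall_exists_gt fun b => ⟨a + k * (b + 1), ?_, ?_⟩
  · simp [W.seq_add_mul, ha]
  · have := W.period_pos
    nlinarith

theorem isClosedSubwalk_nth (d : Fin n) (m : ℕ) :
    W.IsClosedSubwalk d (Nat.nth (W.seq · = d) m) (Nat.nth (W.seq · = d) (m + 1)) where
  lt := Nat.nth_strictMono (W.visits_infinite d) m.lt_succ_self
  seq_left := Nat.nth_mem_of_infinite (W.visits_infinite d) m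
  seq_right := Nat.nth_mem_of_infinite (W.visits_infinite d) (m + 1)
  seq_ne _ h1 h2 ht := (Nat.le_nth_of_lt_nth_succ h2 ht).not_gt h1

theorem exists_closedSubwalk_around {d : Fin n} {s t : ℕ} (hst : s ≤ t) (hs : W.seq s = d) :
    ∃ u w, W.IsClosedSubwalk d u w ∧ u ≤ t ∧ t < w := by
  have hinf := W.visits_infinite d
  obtain ⟨m, hm⟩ : ∃ m, Nat.count (W.seq · = d) (t + 1) = m + 1 :=
    Nat.exists_eq_succ_of_ne_zero (Nat.count_strict_mono hs (by omega)).ne_bot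
  refine ⟨_, _, W.isClosedSubwalk_nth d m, ?_, ?_⟩
  · have := Nat.nth_lt_of_lt_count (p := (W.seq · = d)) (n := t + 1) (k := m) (by omega)
    omega
  · by_contra! h
    have := Nat.count_strict_mono (p := (W.seq · = d)) (Nat.nth_mem_of_infinite hinf (m + 1))
      (Nat.lt_succ_of_le h)
    rw [Nat.count_nth_of_infinite hinf, hm] at this
    exact this.false

theorem nth_add_period_le {d : Fin n} {p : ℕ} (hd : Nat.count (W.seq · = d) k ≤ p) :
    Nat.nth (W.seq · = d) 0 + k ≤ Nat.nth (W.seq · = d) p := by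
  have hinf := W.visits_infinite d
  by_contra! h
  have := Nat.count_monotone (W.seq · = d) (Nat.succ_le_of_lt h)
  rw [Nat.count_nth_succ_of_infinite hinf, Nat.count_add_period (fun t => by rw [W.periodic]),
    Nat.count_nth_zero] at this
  omega

theorem exists_closedSubwalk_le_mul {d : Fin n} {p : ℕ} (hp : 0 < p)
    (hd : Nat.count (W.seq · = d) k ≤ p) :
    ∃ i j, W.IsClosedSubwalk d i j ∧ k ≤ p * (j - i) := by
  set v := Nat.nth (W.seq · = d)
  have hsum : ∑ _m ∈ Finset.range p, k ≤ ∑ m ∈ Finset.range p, p * (v (m + 1) - v m) := by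
    rw [← Finset.mul_sum, Finset.sum_range_tsub (Nat.nth_monotone (W.visits_infinite d)),
      Finset.sum_const, Finset.card_range, smul_eq_mul]
    exact Nat.mul_le_mul_left p (by have := W.nth_add_period_le hd; omega)
  obtain ⟨m, -, hm⟩ := Finset.exists_le_of_sum_le (Finset.nonempty_range_iff.2 hp.ne') hsum
  exact ⟨_, _, W.isClosedSubwalk_nth d m, hm⟩

theorem exists_count_lt {p : ℕ} (hk : k < n * p) : ∃ d, Nat.count (W.seq · = d) k < p := by
  obtain ⟨d, -, hd⟩ := Finset.exists_card_fiber_lt_of_card_lt_mul (s := Finset.range k)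
    (t := Finset.univ) (f := W.seq) (by simpa using hk)
  exact ⟨d, by rwa [Nat.count_eq_card_filter_range]⟩

end Visits

section Maximal

variable (W : CWalk n k)

theorem exists_isClosedSubwalk_maximal : ∃ d i j, W.IsClosedSubwalk d i j ∧
    ∀ d' i' j', W.IsClosedSubwalk d' i' j' → j' - i' ≤ j - i := by
  set S := {L | ∃ d i j, W.IsClosedSubwalk d i j ∧ L = j - i}
  have hne : S.Nonempty := ⟨_, W.seq 0, _, _, W.isClosedSubwalk_nth (W.seq 0) 0, rfl⟩
  have hbdd : BddAbove S := ⟨k, fun _ ⟨_, _, _, h, hL⟩ => by have := h.le_add_period; omega⟩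
  obtain ⟨d, i, j, h, hL⟩ := Nat.sSup_mem hne hbdd
  exact ⟨d, i, j, h, fun d' i' j' h' => hL ▸ le_csSup hbdd ⟨d', i', j', h', rfl⟩⟩

variable {W}

theorem IsClosedSubwalk.exists_seq_eq_of_maximal {d : Fin n} {i j : ℕ}
    (h : W.IsClosedSubwalk d i j)
    (hmax : ∀ d' i' j', W.IsClosedSubwalk d' i' j' → j' - i' ≤ j - i) (hi : k ≤ i)
    (x : Fin n) : ∃ t ∈ Set.Ico i j, W.seq t = x := by
  by_contra! hx
  have hxi : W.seq i ≠ x := hx i ⟨le_rfl, h.lt⟩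
  obtain ⟨a, ha, hax⟩ := W.covers x
  obtain ⟨u, w, hx', hu, hw⟩ := W.exists_closedSubwalk_around (by omega : a ≤ i) hax
  have hui : u < i := hu.lt_of_ne fun hui => hxi (hui ▸ hx'.seq_left)
  have hjw : j < w := by
    by_contra! hwj
    rcases hwj.lt_or_eq with hwj | rfl
    · exact hx w ⟨hw.le, hwj⟩ hx'.seq_right
    · exact hxi (h.seq_left.trans (h.seq_right.symm.trans hx'.seq_right))
  have := hmax x u w hx'
  omega

theorem exists_isClosedSubwalk_maximal_covering (W : CWalk n k) : ∃ d i j,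
    W.IsClosedSubwalk d i j ∧ (∀ d' i' j', W.IsClosedSubwalk d' i' j' → j' - i' ≤ j - i) ∧
      ∀ x, ∃ t ∈ Set.Ico i j, W.seq t = x := by
  obtain ⟨d, i, j, h, hmax⟩ := W.exists_isClosedSubwalk_maximal
  have hmax' : ∀ d' i' j', W.IsClosedSubwalk d' i' j' → j' - i' ≤ j + k - (i + k) := by
    simpa only [Nat.add_sub_add_right] using hmax
  exact ⟨d, i + k, j + k, h.add_period, hmax',
    h.add_period.exists_seq_eq_of_maximal hmax' (by omega)⟩

end Maximal

section Shortcut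

open scoped Classical

variable {c : Fin n → Fin n → ℝ} (W : CWalk n k)

theorem exists_duration_le_of_subsequence (htri : ∀ u v w, c u w ≤ c u v + c v w) {m : ℕ}
    {g : ℕ → ℕ} (hg : Monotone g) (hstep : ∀ t < m, W.seq (g t) ≠ W.seq (g (t + 1)))
    (hclosed : W.seq (g m) = W.seq (g 0)) (hcov : ∀ x, ∃ t < m, W.seq (g t) = x) :
    ∃ W' : CWalk n m, W'.duration c ≤ W.tt c (g 0) (g m) := by
  have hm : 0 < m := by
    obtain ⟨t, ht, -⟩ := hcov (W.seq 0)
    omega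
  have hseq : ∀ t ≤ m, W.seq (g (t % m)) = W.seq (g t) := by
    intro t ht
    rcases ht.lt_or_eq with ht | rfl
    · rw [Nat.mod_eq_of_lt ht]
    · rw [Nat.mod_self, hclosed]
  refine ⟨⟨fun t => W.seq (g (t % m)), fun t => by simp only [Nat.add_mod_right], fun t => ?_,
    fun x => ?_⟩, ?_⟩
  · rw [← Nat.mod_add_mod, hseq _ (Nat.mod_lt t hm)]
    exact hstep _ (Nat.mod_lt t hm)
  · obtain ⟨t, ht, hx⟩ := hcov x
    exact ⟨t, ht, by rw [Nat.mod_eq_of_lt ht, hx]⟩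
  calc ∑ t ∈ Finset.Ico 0 m, c (W.seq (g (t % m))) (W.seq (g ((t + 1) % m)))
      = ∑ t ∈ Finset.range m, c (W.seq (g t)) (W.seq (g (t + 1))) := by
        rw [Finset.range_eq_Ico]
        refine Finset.sum_congr rfl fun t ht => ?_
        rw [Finset.mem_Ico] at ht
        rw [hseq t ht.2.le, hseq (t + 1) ht.2]
    _ ≤ ∑ t ∈ Finset.range m, W.tt c (g t) (g (t + 1)) :=
        Finset.sum_le_sum fun t ht => W.le_tt htri <| (hg t.le_succ).lt_of_ne
          fun he => hstep t (Finset.mem_range.1 ht) (congrArg W.seq he)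
    _ = W.tt c (g 0) (g m) := W.sum_tt c hg m

/-- Indices kept when shortcutting the segment `[i, j)`: all of `[i, i + b]`, then only first
occurrences of targets. Keeping every index from `j` on lets `Nat.nth` enumerate them strictly
monotonically. -/
def Retained (i j b s : ℕ) : Prop :=
  i ≤ s ∧ (s ≤ i + b ∨ j ≤ s ∨ ∀ t, i ≤ t → t < s → W.seq t ≠ W.seq s)

theorem count_retained_zero_le (i j : ℕ) : Nat.count (W.Retained i j 0) j ≤ n := by
  have hfirst : ∀ s ∈ (Finset.range j).filter (W.Retained i j 0),
      ∀ s' ∈ (Finset.range j).filter (W.Retained i j 0), s < s' → W.seq s ≠ W.seq s' := by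
    intro s hs s' hs' hlt
    simp only [Finset.mem_filter, Finset.mem_range, Retained] at hs hs'
    rcases hs'.2.2 with h | h | h
    · omega
    · omega
    · exact h s hs.2.1 hlt
  have hinj : Set.InjOn W.seq ((Finset.range j).filter (W.Retained i j 0)) := by
    intro s hs s' hs' he
    by_contra hne
    rcases Nat.lt_or_gt_of_ne hne with h | h
    · exact hfirst s hs s' hs' h he
    · exact hfirst s' hs' s hs h he.symm
  rw [Nat.count_eq_card_filter_range]
  simpa using Finset.card_le_card_of_injOn W.seq (fun _ _ => Finset.mem_univ _) hinj

theorem le_count_retained (i j : ℕ) : j - i ≤ Nat.count (W.Retained i j (j - i)) j := by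
  rw [Nat.count_eq_card_filter_range, ← Nat.card_Ico i j]
  refine Finset.card_le_card fun s hs => ?_
  simp only [Finset.mem_Ico] at hs
  simp only [Retained, Nat.card_Ico, Finset.mem_filter, Finset.mem_range]
  omega

theorem count_retained_succ_le (i j b : ℕ) :
    Nat.count (W.Retained i j (b + 1)) j ≤ Nat.count (W.Retained i j b) j + 1 := by
  simp only [Nat.count_eq_card_filter_range]
  refine (Finset.card_le_card fun s hs => ?_).trans (Finset.card_insert_le (i + b + 1) _)
  rw [Finset.mem_filter] at hs
  rw [Finset.mem_insert, Finset.mem_filter]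
  obtain ⟨hsj, hi, h | h⟩ := hs
  · by_cases hs : s = i + b + 1
    · exact Or.inl hs
    · exact Or.inr ⟨hsj, hi, Or.inl (by omega)⟩
  · exact Or.inr ⟨hsj, hi, Or.inr h⟩

theorem retained_infinite (i j b : ℕ) : (Set.ofPred (W.Retained i j b)).Infinite :=
  Set.infinite_of_forall_exists_gt fun a =>
    ⟨a + i + j + 1, ⟨by omega, Or.inr (Or.inl (by omega))⟩, by omega⟩

theorem nth_retained_zero (i j b : ℕ) : Nat.nth (W.Retained i j b) 0 = i := by
  have : Nat.count (W.Retained i j b) i = 0 :=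
    Nat.count_of_forall_not fun s hs hPs => by
      have := hPs.1
      omega
  simpa [this] using
    Nat.nth_count (p := W.Retained i j b) ⟨le_rfl, Or.inl (Nat.le_add_right i b)⟩

theorem nth_retained_count {i j : ℕ} (hij : i ≤ j) (b : ℕ) :
    Nat.nth (W.Retained i j b) (Nat.count (W.Retained i j b) j) = j :=
  Nat.nth_count ⟨hij, Or.inr (Or.inl le_rfl)⟩

theorem seq_nth_retained_ne {d : Fin n} {i j b t : ℕ} (h : W.IsClosedSubwalk d i j)
    (hm : 2 ≤ Nat.count (W.Retained i j b) j) (ht : t < Nat.count (W.Retained i j b) j) :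
    W.seq (Nat.nth (W.Retained i j b) t) ≠ W.seq (Nat.nth (W.Retained i j b) (t + 1)) := by
  set P := W.Retained i j b
  have hmono : StrictMono (Nat.nth P) := Nat.nth_strictMono (W.retained_infinite i j b)
  have hmem : ∀ t, P (Nat.nth P t) := Nat.nth_mem_of_infinite (W.retained_infinite i j b)
  have hlt : Nat.nth P t < Nat.nth P (t + 1) := hmono t.lt_succ_self
  have hle : Nat.nth P (t + 1) ≤ j := W.nth_retained_count h.lt.le b ▸ hmono.monotone ht
  obtain ⟨-, hprefix | hend | hfirst⟩ := hmem (t + 1)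
  · -- both indices lie in the prefix `[i, i + b]`, where every index is retained
    have hsucc : Nat.nth P (t + 1) = Nat.nth P t + 1 := by
      refine le_antisymm (not_lt.1 fun hgt => ?_) hlt
      have hPs : P (Nat.nth P t + 1) := ⟨(hmem t).1.trans (Nat.le_succ _), Or.inl (by omega)⟩
      exact (Nat.le_nth_of_lt_nth_succ hgt hPs).not_gt (Nat.lt_succ_self _)
    rw [hsucc]
    exact W.step _
  · have hj : Nat.nth P (t + 1) = j := le_antisymm hle hend
    have ht0 : 0 < t := Nat.pos_of_ne_zero fun ht0 => by
      subst ht0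
      have : Nat.count P j = 0 + 1 :=
        hmono.injective ((W.nth_retained_count h.lt.le b).trans hj.symm)
      omega
    rw [hj, h.seq_right]
    exact h.seq_ne _ (W.nth_retained_zero i j b ▸ hmono ht0) (hlt.trans_le hle)
  · exact hfirst _ (hmem t).1 hlt

theorem exists_seq_nth_retained_eq {i j : ℕ} (hcov : ∀ x, ∃ t ∈ Set.Ico i j, W.seq t = x)
    (b : ℕ) (x : Fin n) :
    ∃ t < Nat.count (W.Retained i j b) j, W.seq (Nat.nth (W.Retained i j b) t) = x := by
  obtain ⟨hs, hsx⟩ := Nat.find_spec (hcov x)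
  have hPs : W.Retained i j b (Nat.find (hcov x)) := ⟨hs.1, Or.inr (Or.inr fun t hit hts hte =>
    Nat.find_min (hcov x) hts ⟨⟨hit, hts.trans hs.2⟩, hte.trans hsx⟩)⟩
  refine ⟨_, Nat.count_strict_mono hPs hs.2, ?_⟩
  rw [Nat.nth_count hPs, hsx]

theorem exists_duration_le_of_covering (htri : ∀ u v w, c u w ≤ c u v + c v w) {d : Fin n}
    {i j m : ℕ} (h : W.IsClosedSubwalk d i j) (hcov : ∀ x, ∃ t ∈ Set.Ico i j, W.seq t = x)
    (hnm : n ≤ m) (hmj : m ≤ j - i) : ∃ W' : CWalk n m, W'.duration c ≤ W.tt c i j := by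
  obtain ⟨b, rfl⟩ := Nat.exists_eq_of_le_of_le_of_succ_le
    (f := fun b => Nat.count (W.Retained i j b) j) (W.count_retained_succ_le i j)
    ((W.count_retained_zero_le i j).trans hnm) (hmj.trans (W.le_count_retained i j))
  have h0 := W.nth_retained_zero i j b
  have hm := W.nth_retained_count h.lt.le b
  have hclosed : W.seq (Nat.nth (W.Retained i j b) (Nat.count (W.Retained i j b) j)) =
      W.seq (Nat.nth (W.Retained i j b) 0) := by
    rw [h0, hm, h.seq_left, h.seq_right]
  simpa [h0, hm] using W.exists_duration_le_of_subsequence htri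
    (Nat.nth_monotone (W.retained_infinite i j b))
    (fun t ht => W.seq_nth_retained_ne h (W.two_le.trans hnm) ht) hclosed
    (W.exists_seq_nth_retained_eq hcov b)

end Shortcut

theorem even_of_two (W : CWalk 2 k) : Even k := by
  have hpar : ∀ t, ((W.seq t : ℕ) + t) % 2 = (W.seq 0 : ℕ) % 2 := by
    intro t
    induction t with
    | zero => simp
    | succ t ih =>
      have := Fin.val_ne_of_ne (W.step t)
      have := (W.seq t).isLt
      have := (W.seq (t + 1)).isLt
      omega
  have := hpar k
  rw [show W.seq k = W.seq 0 by simpa using W.periodic 0] at this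
  exact Nat.even_iff.2 (by omega)

theorem card_le (W : CWalk n k) : n ≤ k := by
  simpa using Fintype.card_le_of_surjective (fun t : Fin k => W.seq t) fun x =>
    let ⟨t, ht, hx⟩ := W.covers x
    ⟨⟨t, ht⟩, hx⟩

theorem nonempty_of_le (hn : 2 ≤ n) (hnk : n ≤ k) (h : 3 ≤ n ∨ Even k) :
    Nonempty (CWalk n k) := by
  -- visit `0, 1, …, n - 1` once, then alternate between `n - 2` and `n - 1`
  let f : ℕ → ℕ := fun s => if s < n then s else n - 2 + (s - n) % 2
  have hf : ∀ s, f s < n := fun s => by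
    simp only [f]
    split <;> omega
  have hk : 0 < k := by omega
  refine ⟨⟨fun t => ⟨f (t % k), hf _⟩, fun t => by simp only [Nat.add_mod_right],
    fun t => ?_, fun x =>
      ⟨x, by omega, Fin.ext (by simp [f, Nat.mod_eq_of_lt (x.isLt.trans_le hnk)])⟩⟩⟩
  rw [Ne, Fin.mk.injEq, ← Nat.mod_add_mod]
  have hlt := Nat.mod_lt t hk
  rcases (show t % k + 1 ≤ k from hlt).lt_or_eq with hs | hs
  · rw [Nat.mod_eq_of_lt hs]
    simp only [f]
    split_ifs <;> omega
  · rw [hs, Nat.mod_self]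
    rcases h with h3 | ⟨r, hr⟩ <;> simp only [f] <;> split_ifs <;> omega

theorem nonempty_iff : Nonempty (CWalk n k) ↔ 2 ≤ n ∧ n ≤ k ∧ (3 ≤ n ∨ Even k) := by
  refine ⟨fun ⟨W⟩ => ⟨W.two_le, W.card_le, ?_⟩,
    fun ⟨hn, hnk, h⟩ => nonempty_of_le hn hnk h⟩
  rcases W.two_le.eq_or_lt with hn | hn
  · subst hn
    exact Or.inr W.even_of_two
  · exact Or.inl hn

theorem nonempty_of_nonempty_add_ceilDiv {n p q : ℕ} (hp : 1 ≤ p) (hq : q ≤ n - 1)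
    (h : Nonempty (CWalk n (n + (q + p - 1) / p))) : Nonempty (CWalk n (p * n + q)) := by
  obtain ⟨hn, -, hpar⟩ := nonempty_iff.1 h
  refine nonempty_iff.2 ⟨hn, by nlinarith, ?_⟩
  by_cases hn3 : 3 ≤ n
  · exact Or.inl hn3
  obtain rfl : n = 2 := by omega
  obtain rfl | rfl : q = 0 ∨ q = 1 := by omega
  · exact Or.inr ⟨p, by ring⟩
  · rw [show 1 + p - 1 = p by omega, Nat.div_self hp] at hpar
    exact absurd hpar (by decide)

end CWalk

theorem Rstar_le_of_forall_exists_R_le {n k m : ℕ} {c : Fin n → Fin n → ℝ}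
    (hc : ∀ u v, u ≠ v → 0 ≤ c u v) (hne : Nonempty (CWalk n m) → Nonempty (CWalk n k))
    (h : ∀ W : CWalk n k, ∃ W' : CWalk n m, W'.R c ≤ W.R c) :
    Rstar n c m ≤ Rstar n c k := by
  rcases isEmpty_or_nonempty (CWalk n k) with hk | ⟨⟨W₀⟩⟩
  · have : IsEmpty (CWalk n m) := not_nonempty_iff.1 (mt hne (not_nonempty_iff.2 hk))
    simp [Rstar]
  · refine le_csInf ⟨_, W₀, rfl⟩ ?_
    rintro _ ⟨W, rfl⟩
    obtain ⟨W', hW'⟩ := h W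
    have hbdd : BddBelow {T | ∃ W'' : CWalk n m, T = W''.R c} := by
      refine ⟨0, ?_⟩
      rintro _ ⟨W'', rfl⟩
      exact W''.R_nonneg hc
    exact (csInf_le hbdd ⟨W', rfl⟩).trans hW'

theorem subwalk_size_lower_bound_general
    (n p q k : ℕ) (hp : 1 ≤ p) (hq : q ≤ n - 1)
    (hk : k = p * n + q)
    (c : Fin n → Fin n → ℝ)
    (hc : ∀ u v : Fin n, u ≠ v → 0 < c u v)
    (htri : ∀ u v w : Fin n, c u w ≤ c u v + c v w) :
    (∀ W : CWalk n k, ∃ (d : Fin n) (i j : ℕ), i < j ∧ W.seq i = d ∧ W.seq j = d ∧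
      (∀ t, i < t → t < j → W.seq t ≠ d) ∧ n + (q + p - 1) / p ≤ j - i) ∧
    Rstar n c (n + (q + p - 1) / p) ≤ Rstar n c k := by
  subst hk
  have hc' : ∀ u v, u ≠ v → 0 ≤ c u v := fun u v huv => (hc u v huv).le
  have hlong (W : CWalk n (p * n + q)) :
      ∃ d i j, W.IsClosedSubwalk d i j ∧ n + (q + p - 1) / p ≤ j - i := by
    have hk : p * n + q < n * (p + 1) := by have := W.two_le; rw [mul_add_one, mul_comm]; omega
    obtain ⟨d, hd⟩ := W.exists_count_lt hk
    obtain ⟨i, j, h, hij⟩ := W.exists_closedSubwalk_le_mul hp (Nat.lt_succ_iff.1 hd)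
    exact ⟨d, i, j, h, Nat.add_ceilDiv_le hp hij⟩
  refine ⟨fun W => ?_, Rstar_le_of_forall_exists_R_le hc'
    (CWalk.nonempty_of_nonempty_add_ceilDiv hp hq) fun W => ?_⟩
  · obtain ⟨d, i, j, h, hij⟩ := hlong W
    exact ⟨d, i, j, h.lt, h.seq_left, h.seq_right, h.seq_ne, hij⟩
  · obtain ⟨d, i, j, h, hmax, hcov⟩ := W.exists_isClosedSubwalk_maximal_covering
    obtain ⟨d', i', j', h', hij'⟩ := hlong W
    obtain ⟨W', hW'⟩ := W.exists_duration_le_of_covering htri h hcov (Nat.le_add_right _ _)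
      (hij'.trans (hmax d' i' j' h'))
    exact ⟨W', (W'.R_le_duration hc').trans <| hW'.trans <|
      (W.tt_le_RT hc' h).trans (W.RT_le_R hc' d)⟩

/-- any closed walk with `k = p n + q` visits contains a closed
subwalk with a terminus having at least `n + ⌈q/p⌉` visits; consequently
`R*(k) ≥ R*(n + ⌈q/p⌉)`. Here `⌈q/p⌉ = (q + p - 1) / p` in natural division. -/
theorem subwalk_size_lower_bound
    (n p q k : ℕ) (hn : 2 ≤ n) (hp : 1 ≤ p) (hq : q ≤ n - 1)
    (hk : k = p * n + q)
    (c : Fin n → Fin n → ℝ)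
    (hc : ∀ u v : Fin n, u ≠ v → 0 < c u v)
    (htri : ∀ u v w : Fin n, c u w ≤ c u v + c v w) :
    (∀ W : CWalk n k, ∃ (d : Fin n) (i j : ℕ), i < j ∧ W.seq i = d ∧ W.seq j = d ∧
      (∀ t, i < t → t < j → W.seq t ≠ d) ∧ n + (q + p - 1) / p ≤ j - i) ∧
    Rstar n c (n + (q + p - 1) / p) ≤ Rstar n c k :=
  subwalk_size_lower_bound_general n p q k hp hq hk c hc htri
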